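/- For every finite group G, the non-Frattini length and generalized Fitting height satisfy h̃(G) ≤ h*(G) ≤ 2·h̃(G). -/

import Mathlib

open scoped Pointwise

/-! Subgroup-valued functions ("functorials") on finite groups, Plotkin's upper products,
iterated series and heights, the generalized Fitting subgroup, `p`-soluble radicals,
non-`p`-soluble length, Fitting formations, and (mutually/totally) permutable products. -/

/-- A subgroup-valued function on all finite groups. -/
abbrev GFun : Type 1 := ∀ (G : Type) [Group G] [Finite G], Subgroup G

/-- A functorial: `γ` commutes with isomorphisms, `f (γ G) = γ (f G)`. -/
def IsoInvariant (γ : GFun) : Prop :=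
  ∀ (G H : Type) [Group G] [Finite G] [Group H] [Finite H] (e : G ≃* H),
    (γ G).map e.toMonoidHom = γ H

/-- Property (F1): `f (γ G) ⊆ γ (f G)` for every epimorphism `f`. -/
def SatF1 (γ : GFun) : Prop :=
  ∀ (G H : Type) [Group G] [Finite G] [Group H] [Finite H] (f : G →* H),
    Function.Surjective f → (γ G).map f ≤ γ H

/-- Property (F2): `γ N ⊆ γ G` for every normal subgroup `N ⊴ G`. -/
def SatF2 (γ : GFun) : Prop :=
  ∀ (G : Type) [Group G] [Finite G] (N : Subgroup G), N.Normal →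
    (γ ↥N).map N.subtype ≤ γ G

/-- Property (F3): `γ G ∩ N ⊆ γ N` for every normal subgroup `N ⊴ G`. -/
def SatF3 (γ : GFun) : Prop :=
  ∀ (G : Type) [Group G] [Finite G] (N : Subgroup G), N.Normal →
    (γ G).comap N.subtype ≤ γ ↥N

/-- `γ` is idempotent: `γ (γ G) = γ G`. -/
def IdemF (γ : GFun) : Prop :=
  ∀ (G : Type) [Group G] [Finite G], (γ ↥(γ G)).map (γ G).subtype = γ G

/-- `N ⊆ γ G` for every normal subgroup `N ⊴ G` with `γ N = N`. -/
def PlotkinClosed (γ : GFun) : Prop :=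
  ∀ (G : Type) [Group G] [Finite G] (N : Subgroup G), N.Normal → γ ↥N = ⊤ → N ≤ γ G

/-- `γ G` is a normal subgroup of `G` for every finite group `G`. -/
def NormalValued (γ : GFun) : Prop :=
  ∀ (G : Type) [Group G] [Finite G], (γ G).Normal

/-- A functorial takes normal (indeed characteristic) values. -/
theorem IsoInvariant.normalValued {γ : GFun} (h : IsoInvariant γ) : NormalValued γ := by
  intro G _ _
  refine ⟨fun n hn g => ?_⟩
  have key := h G G (MulAut.conj g)
  rw [← key]
  exact ⟨n, hn, by simp [MulAut.conj]⟩

theorem normal_sSup {G : Type} [Group G] {S : Set (Subgroup G)}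
    (hS : ∀ N ∈ S, N.Normal) : (sSup S).Normal := by
  have hU : sSup S = Subgroup.closure (⋃ N ∈ S, (N : Set G)) := by
    apply le_antisymm
    · exact sSup_le fun N hN x hx =>
        Subgroup.subset_closure (Set.mem_iUnion₂.2 ⟨N, hN, hx⟩)
    · rw [Subgroup.closure_le]
      intro x hx
      obtain ⟨N, hN, hxN⟩ := Set.mem_iUnion₂.1 hx
      exact le_sSup hN hxN
  refine ⟨fun n hn g => ?_⟩
  rw [hU] at hn ⊢
  induction hn using Subgroup.closure_induction with
  | mem x hx =>
    obtain ⟨N, hN, hxN⟩ := Set.mem_iUnion₂.1 hx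
    exact Subgroup.subset_closure (Set.mem_iUnion₂.2 ⟨N, hN, (hS N hN).conj_mem x hxN g⟩)
  | one => simpa using Subgroup.one_mem _
  | mul x y hx hy ihx ihy =>
    have : g * (x * y) * g⁻¹ = (g * x * g⁻¹) * (g * y * g⁻¹) := by group
    rw [this]; exact mul_mem ihx ihy
  | inv x hx ihx =>
    have : g * x⁻¹ * g⁻¹ = (g * x * g⁻¹)⁻¹ := by group
    rw [this]; exact inv_mem ihx

theorem normal_inf {G : Type} [Group G] {M N : Subgroup G} (hM : M.Normal) (hN : N.Normal) :
    (M ⊓ N).Normal :=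
  ⟨fun n hn g => ⟨hM.conj_mem n hn.1 g, hN.conj_mem n hn.2 g⟩⟩

/-- The upper product `γ₂ ⋆ γ₁`: the preimage in `G` of `γ₁ (G ⧸ γ₂ G)`. -/
def starF (γ₂ γ₁ : GFun) (h : NormalValued γ₂) : GFun :=
  fun G _ _ =>
    letI : (γ₂ G).Normal := h G
    (γ₁ (G ⧸ γ₂ G)).comap (QuotientGroup.mk' (γ₂ G))

theorem starF_normalValued (γ₂ γ₁ : GFun) (h2 : NormalValued γ₂) (h1 : NormalValued γ₁) :
    NormalValued (starF γ₂ γ₁ h2) := by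
  intro G _ _
  letI : (γ₂ G).Normal := h2 G
  exact Subgroup.Normal.comap (h1 _) _

/-- The iterated `γ`-series of a finite group, with normality of each term. -/
def gSeriesAux (γ : GFun) (h : NormalValued γ) (G : Type) [Group G] [Finite G] :
    ℕ → {H : Subgroup G // H.Normal}
  | 0 => ⟨⊥, inferInstance⟩
  | n + 1 =>
    let P := gSeriesAux γ h G n
    letI : P.1.Normal := P.2
    ⟨(γ (G ⧸ P.1)).comap (QuotientGroup.mk' P.1), Subgroup.Normal.comap (h _) _⟩

/-- The iterated `γ`-series: `γ₍₀₎(G) = 1` and `γ₍ᵢ₊₁₎(G)` is the preimage of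
`γ (G ⧸ γ₍ᵢ₎(G))`. -/
def gSeries (γ : GFun) (h : NormalValued γ) (G : Type) [Group G] [Finite G] (n : ℕ) :
    Subgroup G := (gSeriesAux γ h G n).1

/-- The `γ`-height: the least `h` with `γ₍ₕ₎(G) = G`, or `∞` if no such `h` exists. -/
noncomputable def gHeight (γ : GFun) (h : NormalValued γ) (G : Type) [Group G] [Finite G] :
    ℕ∞ := sInf {n : ℕ∞ | ∃ m : ℕ, n = (m : ℕ∞) ∧ gSeries γ h G m = ⊤}

/-- `H/K` is a chief factor of `G`. -/
def IsChiefFactor {G : Type} [Group G] (K H : Subgroup G) : Prop :=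
  K.Normal ∧ H.Normal ∧ K < H ∧
    ∀ L : Subgroup G, L.Normal → K ≤ L → L ≤ H → L = K ∨ L = H

/-- A finite group is quasinilpotent if every element induces an inner automorphism on
every chief factor. -/
def IsQuasinilpotent (G : Type) [Group G] [Finite G] : Prop :=
  ∀ K H : Subgroup G, IsChiefFactor K H →
    ∀ g : G, ∃ h ∈ H, ∀ x ∈ H, g * x * g⁻¹ * (h * x * h⁻¹)⁻¹ ∈ K

/-- A finite group is `p`-soluble if every chief factor is a `p`-group or a `p'`-group. -/
def IsPSoluble (p : ℕ) (G : Type) [Group G] [Finite G] : Prop :=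
  ∀ K H : Subgroup G, IsChiefFactor K H →
    (∀ x ∈ H, ∃ n : ℕ, x ^ (p ^ n) ∈ K) ∨
    (∀ x ∈ H, ∃ n : ℕ, 0 < n ∧ ¬ p ∣ n ∧ x ^ n ∈ K)

/-- The generalized Fitting subgroup `F*(G)`: the largest normal quasinilpotent subgroup. -/
def genFitting : GFun := fun G _ _ => sSup {N : Subgroup G | N.Normal ∧ IsQuasinilpotent ↥N}

theorem genFitting_normal : NormalValued genFitting :=
  fun _ _ _ => normal_sSup fun _ hN => hN.1

/-- The generalized Fitting height `h*`. -/
noncomputable def hStar (G : Type) [Group G] [Finite G] : ℕ∞ :=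
  gHeight genFitting genFitting_normal G

/-- The `p`-soluble radical `R_p(G)`: the largest normal `p`-soluble subgroup. -/
def pRadical (p : ℕ) : GFun := fun G _ _ => sSup {N : Subgroup G | N.Normal ∧ IsPSoluble p ↥N}

theorem pRadical_normal (p : ℕ) : NormalValued (pRadical p) :=
  fun _ _ _ => normal_sSup fun _ hN => hN.1

/-- `F̄_p = R_p ⋆ F* ⋆ R_p`. -/
def pBarFitting (p : ℕ) : GFun :=
  starF (starF (pRadical p) genFitting (pRadical_normal p)) (pRadical p)
    (starF_normalValued _ _ (pRadical_normal p) genFitting_normal)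

theorem pBarFitting_normal (p : ℕ) : NormalValued (pBarFitting p) :=
  starF_normalValued _ _ _ (pRadical_normal p)

/-- The Frattini subgroup, as a subgroup-valued function on finite groups. -/
def frattiniF : GFun := fun G _ _ => frattini G

theorem frattiniF_normal : NormalValued frattiniF := fun G _ _ => by
  show (frattini G).Normal
  exact Subgroup.normal_of_characteristic _

/-- Förster's functorial `F̃ = Φ ⋆ F*`: `F̃(G)/Φ(G) = F*(G/Φ(G))`. -/
def tildeFitting : GFun := starF frattiniF genFitting frattiniF_normal

theorem tildeFitting_normal : NormalValued tildeFitting :=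
  starF_normalValued _ _ frattiniF_normal genFitting_normal

/-- The non-Frattini length `h̃`. -/
noncomputable def hTilde (G : Type) [Group G] [Finite G] : ℕ∞ :=
  gHeight tildeFitting tildeFitting_normal G

/-- `Q` is a (non-empty) direct product of simple groups (nonabelian ones if `nonab`). -/
def IsDirectProdOfSimple (nonab : Bool) (Q : Type) [Group Q] : Prop :=
  ∃ (n : ℕ) (S : Fin n → GrpCat.{0}), 0 < n ∧ (∀ i, IsSimpleGroup (S i)) ∧
    (nonab → ∀ i, ∃ a b : (S i), a * b ≠ b * a) ∧
    Nonempty (Q ≃* ((i : Fin n) → (S i)))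

/-- The factor `H/K` (for `K ⊴ G`) is `p`-soluble. -/
def FactorPSoluble (p : ℕ) {G : Type} [Group G] [Finite G] (K H : Subgroup G)
    (hK : K.Normal) : Prop :=
  letI : (K.subgroupOf H).Normal := hK.subgroupOf H
  IsPSoluble p (↥H ⧸ K.subgroupOf H)

/-- The factor `H/K` is a non-empty direct product of (nonabelian) simple groups. -/
def FactorSimpleProd (nonab : Bool) {G : Type} [Group G] [Finite G] (K H : Subgroup G)
    (hK : K.Normal) : Prop :=
  letI : (K.subgroupOf H).Normal := hK.subgroupOf H
  IsDirectProdOfSimple nonab (↥H ⧸ K.subgroupOf H)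

/-- `G` has a normal series `1 = G₀ ≤ G₁ ≤ ⋯ ≤ G₂ₕ₊₁ = G` in which the factors
`Gᵢ₊₁/Gᵢ` for `i` even are `p`-soluble (possibly trivial) and for `i` odd are
non-empty direct products of nonabelian simple groups. -/
def HasLambdaSeries (p : ℕ) (G : Type) [Group G] [Finite G] (h : ℕ) : Prop :=
  ∃ c : Fin (2 * h + 2) → Subgroup G, Monotone c ∧ c 0 = ⊥ ∧ c (Fin.last _) = ⊤ ∧
    ∃ hn : ∀ i, (c i).Normal,
      ∀ i : Fin (2 * h + 1),
        if (i : ℕ) % 2 = 0 then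
          FactorPSoluble p (c i.castSucc) (c i.succ) (hn _)
        else
          FactorSimpleProd true (c i.castSucc) (c i.succ) (hn _)

/-- The non-`p`-soluble length `λ_p(G)`: the least `h` admitting such a series. -/
noncomputable def lambdaP (p : ℕ) (G : Type) [Group G] [Finite G] : ℕ∞ :=
  sInf {n : ℕ∞ | ∃ h : ℕ, n = (h : ℕ∞) ∧ HasLambdaSeries p G h}

/-- A class of finite groups. -/
abbrev GClass : Type 1 := ∀ (G : Type) [Group G] [Finite G], Prop

/-- Closed under homomorphic images. -/
def QuotClosed (𝔉 : GClass) : Prop :=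
  ∀ (G H : Type) [Group G] [Finite G] [Group H] [Finite H] (f : G →* H),
    Function.Surjective f → 𝔉 G → 𝔉 H

/-- If `G/M, G/N ∈ 𝔉` then `G/(M ∩ N) ∈ 𝔉`. -/
def InterClosed (𝔉 : GClass) : Prop :=
  ∀ (G : Type) [Group G] [Finite G] (M N : Subgroup G) (hM : M.Normal) (hN : N.Normal),
    (letI := hM; 𝔉 (G ⧸ M)) → (letI := hN; 𝔉 (G ⧸ N)) →
      (letI : (M ⊓ N).Normal := normal_inf hM hN; 𝔉 (G ⧸ (M ⊓ N)))

/-- Closed under normal subgroups. -/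
def NormalClosed (𝔉 : GClass) : Prop :=
  ∀ (G : Type) [Group G] [Finite G] (N : Subgroup G), N.Normal → 𝔉 G → 𝔉 ↥N

/-- A group is in `𝔉` whenever it is the product of two normal `𝔉`-subgroups. -/
def NormalProdClosed (𝔉 : GClass) : Prop :=
  ∀ (G : Type) [Group G] [Finite G] (M N : Subgroup G), M.Normal → N.Normal →
    𝔉 ↥M → 𝔉 ↥N → M ⊔ N = ⊤ → 𝔉 G

/-- A Fitting formation. -/
def IsFittingFormation (𝔉 : GClass) : Prop :=
  QuotClosed 𝔉 ∧ InterClosed 𝔉 ∧ NormalClosed 𝔉 ∧ NormalProdClosed 𝔉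

/-- The `𝔉`-radical: the largest normal `𝔉`-subgroup. -/
def fRadical (𝔉 : GClass) : GFun := fun G _ _ => sSup {N : Subgroup G | N.Normal ∧ 𝔉 ↥N}

theorem fRadical_normal (𝔉 : GClass) : NormalValued (fRadical 𝔉) :=
  fun _ _ _ => normal_sSup fun _ hN => hN.1

/-- The `𝔉`-residual: the smallest normal subgroup with quotient in `𝔉`. -/
def fResidual (𝔉 : GClass) (G : Type) [Group G] [Finite G] : Subgroup G :=
  sInf {N : Subgroup G | ∃ hN : N.Normal, (letI := hN; 𝔉 (G ⧸ N))}

/-- The `𝔉`-height `h_𝔉`. -/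
noncomputable def fHeight (𝔉 : GClass) (G : Type) [Group G] [Finite G] : ℕ∞ :=
  gHeight (fRadical 𝔉) (fRadical_normal 𝔉) G

/-- The `n`-fold formation product `𝔉ⁿ` (with `𝔉⁰` the class of trivial groups):
`G ∈ 𝔉ⁿ⁺¹` iff the `𝔉`-residual `G^𝔉` lies in `𝔉ⁿ`. -/
def fPow (𝔉 : GClass) : ℕ → GClass
  | 0 => fun G _ _ => Subsingleton G
  | n + 1 => fun G _ _ => fPow 𝔉 n ↥(fResidual 𝔉 G)

/-- `A` is a subnormal subgroup of `G`. -/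
def IsSubnormalIn {G : Type} [Group G] (A : Subgroup G) : Prop :=
  ∃ (n : ℕ) (c : Fin (n + 1) → Subgroup G), c 0 = A ∧ c (Fin.last n) = ⊤ ∧
    ∀ i : Fin n, c i.castSucc ≤ c i.succ ∧ ((c i.castSucc).subgroupOf (c i.succ)).Normal

/-- `G` is the mutually permutable product of its subgroups `A` and `B`. -/
def MutuallyPermutable {G : Type} [Group G] (A B : Subgroup G) : Prop :=
  (A : Set G) * (B : Set G) = Set.univ ∧
  (∀ H : Subgroup G, H ≤ B → (A : Set G) * (H : Set G) = (H : Set G) * (A : Set G)) ∧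
  (∀ K : Subgroup G, K ≤ A → (B : Set G) * (K : Set G) = (K : Set G) * (B : Set G))

/-- `G` is the totally permutable product of its subgroups `A` and `B`. -/
def TotallyPermutable {G : Type} [Group G] (A B : Subgroup G) : Prop :=
  (A : Set G) * (B : Set G) = Set.univ ∧
  ∀ H K : Subgroup G, H ≤ A → K ≤ B → (H : Set G) * (K : Set G) = (K : Set G) * (H : Set G)

section Statement18Aux

open Subgroup
open scoped commutatorElement

/-- Quasinilpotency passes to surjective images. -/
theorem IsQuasinilpotent.of_surjective {G H : Type} [Group G] [Finite G] [Group H] [Finite H]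
    (hG : IsQuasinilpotent G) (f : G →* H) (hf : Function.Surjective f) :
    IsQuasinilpotent H := by
  intro K L hCF g
  obtain ⟨hK, hL, hKL, hmax⟩ := hCF
  have hker : f.ker ≤ K.comap f := by
    intro x hx
    have hx1 : f x = 1 := hx
    show f x ∈ K
    rw [hx1]; exact K.one_mem
  have hchief : IsChiefFactor (K.comap f) (L.comap f) := by
    refine ⟨hK.comap f, hL.comap f, ?_, ?_⟩
    · refine lt_of_le_of_ne (Subgroup.comap_mono hKL.le) ?_
      intro hEq
      obtain ⟨y, hyL, hyK⟩ := SetLike.exists_of_lt hKL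
      obtain ⟨x, rfl⟩ := hf y
      have hx : x ∈ L.comap f := hyL
      rw [← hEq] at hx
      exact hyK hx
    · intro N hN h1 h2
      have hkerN : f.ker ≤ N := le_trans hker h1
      have hNeq : (N.map f).comap f = N := by
        rw [Subgroup.comap_map_eq f N, sup_eq_left.mpr hkerN]
      have hKle : K ≤ N.map f := by
        have := Subgroup.map_mono (f := f) h1
        rwa [Subgroup.map_comap_eq_self_of_surjective hf K] at this
      have hleL : N.map f ≤ L := by
        have := Subgroup.map_mono (f := f) h2
        rwa [Subgroup.map_comap_eq_self_of_surjective hf L] at this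
      rcases hmax (N.map f) (hN.map f hf) hKle hleL with h | h
      · left; rw [← hNeq, h]
      · right; rw [← hNeq, h]
  obtain ⟨g₀, rfl⟩ := hf g
  obtain ⟨h₀, hh₀, hcomm⟩ := hG _ _ hchief g₀
  refine ⟨f h₀, hh₀, fun x hx => ?_⟩
  obtain ⟨x₀, rfl⟩ := hf x
  have := hcomm x₀ hx
  have h2 : f (g₀ * x₀ * g₀⁻¹ * (h₀ * x₀ * h₀⁻¹)⁻¹) ∈ K := this
  simpa [map_mul, map_inv] using h2

/-- `F*` satisfies property (F1). -/
theorem genFitting_satF1 : SatF1 genFitting := by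
  intro G H _ _ _ _ f hf
  show Subgroup.map f (sSup _) ≤ _
  rw [(Subgroup.gc_map_comap f).l_sSup]
  refine iSup₂_le fun N hN => le_sSup ?_
  exact ⟨hN.1.map f hf,
    hN.2.of_surjective (f.subgroupMap N) (f.subgroupMap_surjective N)⟩

/-- Nilpotent finite groups are quasinilpotent. -/
theorem IsQuasinilpotent.of_nilpotent {G : Type} [Group G] [Finite G]
    (hG : Group.IsNilpotent G) : IsQuasinilpotent G := by
  intro K L hCF g
  obtain ⟨hK, hL, hKL, hmax⟩ := hCF
  haveI := hK; haveI := hL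
  refine ⟨1, L.one_mem, fun x hx => ?_⟩
  have hC : ⁅(⊤ : Subgroup G), L⁆ ≤ K := by
    have hCL : ⁅(⊤ : Subgroup G), L⁆ ≤ L := Subgroup.commutator_le_right ⊤ L
    rcases hmax (K ⊔ ⁅(⊤ : Subgroup G), L⁆) inferInstance le_sup_left
        (sup_le hKL.le hCL) with h | h
    · exact le_sup_right.trans h.le
    · exfalso
      haveI := hG
      let f := QuotientGroup.mk' K
      have hfs : Function.Surjective f := QuotientGroup.mk'_surjective K
      have hmapK : K.map f = ⊥ := by
        rw [Subgroup.map_eq_bot_iff, QuotientGroup.ker_mk']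
      have h2 : Subgroup.map f ⁅(⊤ : Subgroup G), L⁆ = L.map f := by
        conv_rhs => rw [← h]
        rw [Subgroup.map_sup, hmapK, bot_sup_eq]
      have h3 : ⁅(⊤ : Subgroup (G ⧸ K)), L.map f⁆ = L.map f := by
        rw [← Subgroup.map_top_of_surjective f hfs, ← Subgroup.map_commutator, h2]
      have h4 : ∀ n, L.map f ≤ Subgroup.lowerCentralSeries (⊤ : Subgroup (G ⧸ K)) n := by
        intro n
        induction n with
        | zero => exact le_top
        | succ n ih =>
          rw [_root_.lowerCentralSeries_succ]
          calc L.map f = ⁅(⊤ : Subgroup (G ⧸ K)), L.map f⁆ := h3.symm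
            _ = ⁅L.map f, (⊤ : Subgroup (G ⧸ K))⁆ := Subgroup.commutator_comm _ _
            _ ≤ ⁅Subgroup.lowerCentralSeries (⊤ : Subgroup (G ⧸ K)) n, ⊤⁆ := Subgroup.commutator_mono ih le_rfl
      obtain ⟨m, hm⟩ := _root_.nilpotent_iff_lowerCentralSeries.mp
        (inferInstance : Group.IsNilpotent (G ⧸ K))
      have h5 : L.map f ≤ ⊥ := hm ▸ h4 m
      have h6 : L ≤ K := by
        intro y hy
        have : f y ∈ (⊥ : Subgroup (G ⧸ K)) := h5 ⟨y, hy, rfl⟩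
        have : f y = 1 := this
        rwa [← QuotientGroup.ker_mk' K]
      exact hKL.not_ge h6
  have hmem : ⁅g, x⁆ ∈ ⁅(⊤ : Subgroup G), L⁆ :=
    Subgroup.commutator_mem_commutator (Subgroup.mem_top g) hx
  have : g * x * g⁻¹ * (1 * x * 1⁻¹)⁻¹ = ⁅g, x⁆ := by
    rw [commutatorElement_def]; group
  rw [this]
  exact hC hmem

theorem frattini_le_genFitting (G : Type) [Group G] [Finite G] :
    frattini G ≤ genFitting G :=
  le_sSup ⟨Subgroup.normal_of_characteristic _,
    IsQuasinilpotent.of_nilpotent frattini_nilpotent⟩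

theorem gSeries_normal (γ : GFun) (h : NormalValued γ) (G : Type) [Group G] [Finite G]
    (n : ℕ) : (gSeries γ h G n).Normal := (gSeriesAux γ h G n).2

theorem gSeries_succ_eq (γ : GFun) (h : NormalValued γ) (G : Type) [Group G] [Finite G]
    (n : ℕ) :
    haveI : (gSeries γ h G n).Normal := gSeries_normal γ h G n
    gSeries γ h G (n+1) =
      (γ (G ⧸ gSeries γ h G n)).comap (QuotientGroup.mk' (gSeries γ h G n)) := rfl

theorem tildeFitting_eq (Q : Type) [Group Q] [Finite Q] :
    tildeFitting Q = (genFitting (Q ⧸ frattini Q)).comap (QuotientGroup.mk' (frattini Q)) :=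
  rfl

/-- The quotient map `G ⧸ A →* G ⧸ B` for `A ≤ B`. -/
private def qmap {G : Type} [Group G] {A B : Subgroup G} [A.Normal] [B.Normal] (hAB : A ≤ B) :
    G ⧸ A →* G ⧸ B :=
  QuotientGroup.map A B (MonoidHom.id G) (fun _ hx => hAB hx)

private theorem qmap_mk {G : Type} [Group G] {A B : Subgroup G} [A.Normal] [B.Normal]
    (hAB : A ≤ B) (x : G) :
    qmap hAB ((QuotientGroup.mk' A) x) = (QuotientGroup.mk' B) x :=
  QuotientGroup.map_mk A B (MonoidHom.id G) _ x

private theorem qmap_surjective {G : Type} [Group G] {A B : Subgroup G} [A.Normal] [B.Normal]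
    (hAB : A ≤ B) : Function.Surjective (qmap hAB) := by
  intro y
  obtain ⟨x, rfl⟩ := QuotientGroup.mk'_surjective B y
  exact ⟨(QuotientGroup.mk' A) x, qmap_mk hAB x⟩

theorem series_star_le_tilde (G : Type) [Group G] [Finite G] (n : ℕ) :
    gSeries genFitting genFitting_normal G n ≤ gSeries tildeFitting tildeFitting_normal G n := by
  induction n with
  | zero => exact le_rfl
  | succ n ih =>
    set A := gSeries genFitting genFitting_normal G n with hA
    set B := gSeries tildeFitting tildeFitting_normal G n with hB
    haveI : A.Normal := gSeries_normal _ _ G n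
    haveI : B.Normal := gSeries_normal _ _ G n
    rw [gSeries_succ_eq, gSeries_succ_eq, tildeFitting_eq]
    intro x hx
    rw [Subgroup.mem_comap] at hx
    rw [Subgroup.mem_comap, Subgroup.mem_comap]
    set Q := G ⧸ B
    let φ : (G ⧸ A) →* (Q ⧸ frattini Q) :=
      (QuotientGroup.mk' (frattini Q)).comp (qmap ih)
    have hφs : Function.Surjective φ :=
      (QuotientGroup.mk'_surjective (frattini Q)).comp (qmap_surjective ih)
    have := genFitting_satF1 (G ⧸ A) (Q ⧸ frattini Q) φ hφs ⟨_, hx, rfl⟩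
    rwa [show φ ((QuotientGroup.mk' A) x)
        = (QuotientGroup.mk' (frattini Q)) ((QuotientGroup.mk' B) x) by
      show (QuotientGroup.mk' (frattini Q)) ((qmap ih) ((QuotientGroup.mk' A) x)) = _
      rw [qmap_mk ih]] at this

theorem series_tilde_le_star (G : Type) [Group G] [Finite G] (n : ℕ) :
    gSeries tildeFitting tildeFitting_normal G n ≤
      gSeries genFitting genFitting_normal G (2 * n) := by
  induction n with
  | zero => exact le_rfl
  | succ n ih =>
    have h2n : 2 * (n + 1) = (2 * n + 1) + 1 := by ring
    rw [h2n]
    set B := gSeries tildeFitting tildeFitting_normal G n with hB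
    set A := gSeries genFitting genFitting_normal G (2 * n) with hA
    set A' := gSeries genFitting genFitting_normal G (2 * n + 1) with hA'
    haveI : B.Normal := gSeries_normal _ _ G n
    haveI : A.Normal := gSeries_normal _ _ G (2 * n)
    haveI : A'.Normal := gSeries_normal _ _ G (2 * n + 1)
    have hAA' : A ≤ A' := by
      rw [hA', gSeries_succ_eq]
      intro x hx
      rw [Subgroup.mem_comap]
      have : (QuotientGroup.mk' A) x = 1 := by
        rw [← QuotientGroup.ker_mk' A] at hx; exact hx
      rw [this]; exact Subgroup.one_mem _
    have hBA' : B ≤ A' := le_trans ih hAA'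
    -- the key step (a): the preimage of `Φ(G/B)` lies in `A'`
    have key : ∀ x : G, (QuotientGroup.mk' B) x ∈ frattini (G ⧸ B) → x ∈ A' := by
      intro x hx
      have h1 := frattini_le_comap_frattini_of_surjective (qmap_surjective ih) hx
      rw [Subgroup.mem_comap, qmap_mk ih] at h1
      have h2 : (QuotientGroup.mk' A) x ∈ genFitting (G ⧸ A) :=
        frattini_le_genFitting _ h1
      rw [hA', gSeries_succ_eq, Subgroup.mem_comap]
      exact h2
    rw [gSeries_succ_eq, gSeries_succ_eq, tildeFitting_eq]
    intro x hx
    rw [Subgroup.mem_comap, Subgroup.mem_comap] at hx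
    rw [Subgroup.mem_comap]
    set Q := G ⧸ B
    set Φ := frattini Q with hΦ
    let ψ : Q →* (G ⧸ A') := qmap hBA'
    have hΦker : ∀ q ∈ Φ, ψ q = 1 := by
      intro q hq
      obtain ⟨x₀, rfl⟩ := QuotientGroup.mk'_surjective B q
      have hx₀ : x₀ ∈ A' := key x₀ hq
      show ψ ((QuotientGroup.mk' B) x₀) = 1
      rw [qmap_mk hBA']
      rw [← QuotientGroup.ker_mk' A'] at hx₀
      exact hx₀
    let ρ : (Q ⧸ Φ) →* (G ⧸ A') := QuotientGroup.lift Φ ψ hΦker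
    have hρs : Function.Surjective ρ := by
      intro y
      obtain ⟨q, rfl⟩ := qmap_surjective hBA' y
      exact ⟨QuotientGroup.mk q, rfl⟩
    have := genFitting_satF1 (Q ⧸ Φ) (G ⧸ A') ρ hρs ⟨_, hx, rfl⟩
    rwa [show ρ ((QuotientGroup.mk' Φ) ((QuotientGroup.mk' B) x))
        = (QuotientGroup.mk' A') x by
      show ψ ((QuotientGroup.mk' B) x) = _
      exact qmap_mk hBA' x] at this

end Statement18Aux

/-- for every finite group `G`, `h̃(G) ≤ h*(G) ≤ 2·h̃(G)`. -/
theorem hTilde_le_hStar_le_two_mul (G : Type) [Group G] [Finite G] :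
    hTilde G ≤ hStar G ∧ hStar G ≤ 2 * hTilde G := by
  classical
  constructor
  · apply sInf_le_sInf
    rintro n ⟨m, rfl, hm⟩
    refine ⟨m, rfl, ?_⟩
    have h := series_star_le_tilde G m
    rw [hm] at h
    exact top_le_iff.mp h
  · by_cases hne : ∃ m : ℕ, gSeries tildeFitting tildeFitting_normal G m = ⊤
    · set m₀ := Nat.find hne with hm₀def
      have hm₀ : gSeries tildeFitting tildeFitting_normal G m₀ = ⊤ := Nat.find_spec hne
      have h1 : hStar G ≤ ((2 * m₀ : ℕ) : ℕ∞) := by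
        apply sInf_le
        refine ⟨2 * m₀, rfl, ?_⟩
        have h := series_tilde_le_star G m₀
        rw [hm₀] at h
        exact top_le_iff.mp h
      have h2 : (m₀ : ℕ∞) ≤ hTilde G := by
        apply le_sInf
        rintro n ⟨m, rfl, hm⟩
        exact_mod_cast Nat.find_le hm
      calc hStar G ≤ ((2 * m₀ : ℕ) : ℕ∞) := h1
        _ = 2 * (m₀ : ℕ∞) := by push_cast; ring
        _ ≤ 2 * hTilde G := mul_le_mul_right h2 2
    · have hempty : hTilde G = ⊤ := by
        rw [hTilde, gHeight]
        refine (congrArg sInf ?_).trans sInf_empty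
        rw [Set.eq_empty_iff_forall_notMem]
        rintro n ⟨m, rfl, hm⟩
        exact hne ⟨m, hm⟩
      rw [hempty]
      refine le_trans le_top (le_of_eq ?_)
      rw [ENat.mul_top (by norm_num : (2 : ℕ∞) ≠ 0)]
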